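/- In KSPM(3), if a column i+1 is fired in an avalanche s while column i is not fired, then π(k−1)_i = 0; and if column i+1 is fired while column i+2 is not fired, then π(k−1)_{i+1} = 2. -/
import Mathlib


/-- Effect of firing column `i` in KSPM(D), on height-difference configurations. -/
def step (D : ℕ) (σ : ℕ → ℕ) (i : ℕ) : ℕ → ℕ :=
  fun j =>
    if j = i then σ i - D
    else if j + 1 = i then σ j + (D - 1)
    else if j = i + D - 1 then σ j + 1
    else σ j

/-- Transition on column `i`: `σ →ᵢ σ'`. -/
def KTrans (D : ℕ) (σ : ℕ → ℕ) (i : ℕ) (σ' : ℕ → ℕ) : Prop :=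
  D ≤ σ i ∧ σ' = step D σ i

/-- A strategy (list of fired columns) is legal from `σ`. -/
def Legal (D : ℕ) : (ℕ → ℕ) → List ℕ → Prop
  | _, [] => True
  | σ, i :: s => D ≤ σ i ∧ Legal D (step D σ i) s

/-- Configuration obtained by applying a strategy. -/
def applyStrat (D : ℕ) : (ℕ → ℕ) → List ℕ → (ℕ → ℕ)
  | σ, [] => σ
  | σ, i :: s => applyStrat D (step D σ i) s

/-- Reachability `σ →* σ'`. -/
def Reaches (D : ℕ) (σ σ' : ℕ → ℕ) : Prop :=
  ∃ s : List ℕ, Legal D σ s ∧ applyStrat D σ s = σ'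

/-- A configuration is stable (a fixed point) if no transition is possible. -/
def Stable (D : ℕ) (σ : ℕ → ℕ) : Prop := ∀ i, σ i < D

/-- Initial configuration: `N` grains stacked on column 0 (height differences `(N,0,0,…)`). -/
def initConf (N : ℕ) : ℕ → ℕ := fun j => if j = 0 then N else 0

/-- `τ = π(N)`: the stable configuration reachable from `N` stacked grains. -/
def IsPi (D N : ℕ) (τ : ℕ → ℕ) : Prop := Reaches D (initConf N) τ ∧ Stable D τ

/-- `σ^{↓0}`: add one grain on column 0. -/
def addGrain (σ : ℕ → ℕ) : ℕ → ℕ := Function.update σ 0 (σ 0 + 1)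

/-- `s` is the leftmost (lexicographically minimal) strategy from `τ^{↓0}` to `τ'`. -/
def IsAvalancheFor (D : ℕ) (τ τ' : ℕ → ℕ) (s : List ℕ) : Prop :=
  Legal D (addGrain τ) s ∧ applyStrat D (addGrain τ) s = τ' ∧
    ∀ s' : List ℕ, Legal D (addGrain τ) s' → applyStrat D (addGrain τ) s' = τ' →
      ¬ List.Lex (· < ·) s' s

/-- `s` is the `k`-th avalanche: leftmost strategy from `π(k-1)^{↓0}` to `π(k)`. -/
def IsAvalanche (D k : ℕ) (s : List ℕ) : Prop :=
  ∃ τ τ' : ℕ → ℕ, IsPi D (k - 1) τ ∧ IsPi D k τ' ∧ IsAvalancheFor D τ τ' s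

/-- Position `t` (0-indexed) of strategy `s` is a peak: it exceeds all earlier fired columns. -/
def IsPeak (s : List ℕ) (t : ℕ) : Prop :=
  t < s.length ∧ ∀ t' < t, s.getD t' 0 < s.getD t 0

/-- Column `p` is a peak of `s`. -/
def IsPeakVal (s : List ℕ) (p : ℕ) : Prop :=
  ∃ t : ℕ, IsPeak s t ∧ s.getD t 0 = p

lemma legal_append (D : ℕ) (p q : List ℕ) :
    ∀ σ : ℕ → ℕ, Legal D σ (p ++ q) ↔ Legal D σ p ∧ Legal D (applyStrat D σ p) q := by
  induction p with
  | nil => intro σ; simp [Legal, applyStrat]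
  | cons i p ih =>
    intro σ
    constructor
    · rintro ⟨h, hl⟩
      have h2 := (ih (step D σ i)).mp hl
      exact ⟨⟨h, h2.1⟩, h2.2⟩
    · rintro ⟨⟨h, hl⟩, hq⟩
      exact ⟨h, (ih (step D σ i)).mpr ⟨hl, hq⟩⟩

lemma applyStrat_count (s : List ℕ) :
    ∀ σ : ℕ → ℕ, Legal 3 σ s → ∀ x,
      applyStrat 3 σ s x + 3 * s.count x =
        σ x + 2 * s.count (x + 1) + (if 2 ≤ x then s.count (x - 2) else 0) := by
  induction s with
  | nil => intro σ _ x; simp [applyStrat]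
  | cons i s ih =>
    rintro σ ⟨h3, hleg⟩ x
    have key := ih (step 3 σ i) hleg x
    have happ : applyStrat 3 σ (i :: s) x = applyStrat 3 (step 3 σ i) s x := rfl
    rw [happ]
    simp only [List.count_cons, beq_iff_eq]
    rw [show step 3 σ i x = if x = i then σ i - 3 else if x + 1 = i then σ x + 2
        else if x = i + 2 then σ x + 1 else σ x by simp [step]] at key
    by_cases e1 : x = i
    · subst e1
      split_ifs at key ⊢ <;> omega
    · split_ifs at key ⊢ <;> omega

lemma count_le_one (σ₀ : ℕ → ℕ) (h0 : σ₀ 0 ≤ 3) (h1 : ∀ x, 1 ≤ x → σ₀ x ≤ 2) :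
    ∀ p : List ℕ, Legal 3 σ₀ p → ∀ x, p.count x ≤ 1 := by
  intro p
  induction p using List.reverseRecOn with
  | nil => intro _ x; simp
  | append_singleton p j ih =>
    intro hleg x
    have hp := (legal_append 3 p [j] σ₀).mp hleg
    have ihp := ih hp.1
    by_cases hjx : j = x
    · subst hjx
      have hcnt : (p ++ [j]).count j = p.count j + 1 := by simp
      rw [hcnt]
      by_contra hc
      have h3 : (3 : ℕ) ≤ applyStrat 3 σ₀ p j := hp.2.1
      have key := applyStrat_count p σ₀ hp.1 j
      have b1 := ihp (j + 1)
      by_cases hj2 : 2 ≤ j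
      · rw [if_pos hj2] at key
        have := ihp (j - 2)
        have := h1 j (by omega)
        omega
      · rw [if_neg hj2] at key
        have hσ3 : σ₀ j ≤ 3 := by
          by_cases h : j = 0
          · subst h; exact h0
          · have := h1 j (by omega); omega
        omega
    · have hz : List.count x [j] = 0 := by
        apply List.count_eq_zero.mpr
        simp
        omega
      rw [List.count_append, hz]
      have := ihp x
      omega

/-- In KSPM(3): if i+1 is fired while i is not, then π(k-1)_i = 0; if i+1 is fired
while i+2 is not, then π(k-1)_{i+1} = 2. -/
theorem kspm3_unfired_neighbors (k : ℕ) (hk : 1 ≤ k)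
    (s : List ℕ) (τ τ' : ℕ → ℕ) (hτ : IsPi 3 (k - 1) τ) (hτ' : IsPi 3 k τ')
    (hav : IsAvalancheFor 3 τ τ' s) (i : ℕ) :
    ((i + 1) ∈ s → i ∉ s → τ i = 0) ∧
      ((i + 1) ∈ s → (i + 2) ∉ s → τ (i + 1) = 2) := by
  obtain ⟨hleg, happ, _⟩ := hav
  have hstab : ∀ x, τ x < 3 := hτ.2
  have hstab' : ∀ x, τ' x < 3 := hτ'.2
  set σ₀ := addGrain τ with hσ₀
  have hσval : ∀ x, σ₀ x = if x = 0 then τ 0 + 1 else τ x := by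
    intro x
    by_cases h : x = 0
    · subst h; simp [hσ₀, addGrain, Function.update]
    · simp [hσ₀, addGrain, Function.update, h]
  have hb0 : σ₀ 0 ≤ 3 := by rw [hσval]; simp; have := hstab 0; omega
  have hb1 : ∀ x, 1 ≤ x → σ₀ x ≤ 2 := by
    intro x hx; rw [hσval]; have := hstab x; rw [if_neg (by omega)]; omega
  have honce := count_le_one σ₀ hb0 hb1 s hleg
  constructor
  · intro hmem hnot
    have hc0 : s.count i = 0 := List.count_eq_zero.mpr hnot
    have hc1 : 1 ≤ s.count (i + 1) := List.count_pos_iff.mpr hmem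
    have key := applyStrat_count s σ₀ hleg i
    rw [happ] at key
    have hfin := hstab' i
    have hσi := hσval i
    by_cases h : i = 0
    · rw [if_pos h] at hσi; subst h; omega
    · rw [if_neg h] at hσi; omega
  · intro hmem hnot2
    obtain ⟨p, q, hpq⟩ := List.append_of_mem hmem
    subst hpq
    have hlp : Legal 3 σ₀ p ∧ Legal 3 (applyStrat 3 σ₀ p) ((i + 1) :: q) :=
      (legal_append 3 p ((i + 1) :: q) σ₀).mp hleg
    have h3 : (3 : ℕ) ≤ applyStrat 3 σ₀ p (i + 1) := hlp.2.1
    have key := applyStrat_count p σ₀ hlp.1 (i + 1)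
    -- count of i+1 in p is 0 since total count ≤ 1 and there is one occurrence after p
    have hcs : (p ++ (i + 1) :: q).count (i + 1) ≤ 1 := honce (i + 1)
    have hcsplit : (p ++ (i + 1) :: q).count (i + 1) =
        p.count (i + 1) + (q.count (i + 1) + 1) := by
      simp [List.count_append, List.count_cons]
    have hcp : p.count (i + 1) = 0 := by omega
    -- i+2 not in s, so not in p
    have hcp2 : p.count (i + 2) = 0 := by
      apply List.count_eq_zero.mpr
      intro h
      exact hnot2 (by simp [h])
    -- receipt from i-1 at most 1
    have honcep := count_le_one σ₀ hb0 hb1 p hlp.1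
    have hr : (if 2 ≤ i + 1 then p.count (i + 1 - 2) else 0) ≤ 1 := by
      split
      · exact honcep (i + 1 - 2)
      · omega
    have hσi := hσval (i + 1)
    rw [if_neg (by omega)] at hσi
    have := hstab (i + 1)
    rw [hcp, hcp2] at key
    omega
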